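/- arXiv:1304.7665 — 2 statements merged into one kernel-verified Lean document; each statement's English description precedes it below -/
import Mathlib

section
/- Every solution y : [t₀,∞) → ℝ of the sliding-mode differential equation ẏ = −χ(y), where χ is the saturated linear function with parameters γ, δ > 0, converges to 0 as t → ∞, and |y(t)| is monotone nonincreasing. -/
/-!
Along a solution, `y²` has derivative `-2 y χ(y) = -2γ |y| min(|y|, δ) ≤ 0`, so `|y|` is
nonincreasing. If `|y|` stayed above some `ε > 0`, this derivative would stay below
`-2γ ε min(ε, δ) < 0`, and the nonnegative function `y²` would decrease linearly forever.
-/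

/-- The saturated linear function. -/
noncomputable def chi (γ δ : ℝ) (z : ℝ) : ℝ := if |z| ≤ δ then γ * z else γ * δ * Real.sign z

open Set Filter

theorem image_sub_le_mul_sub_of_hasDerivAt_le {f f' : ℝ → ℝ} {a C : ℝ}
    (hf : ∀ t ∈ Ici a, HasDerivAt f (f' t) t) (hf' : ∀ t ∈ Ici a, f' t ≤ C)
    {s t : ℝ} (hs : s ∈ Ici a) (hst : s ≤ t) : f t - f s ≤ C * (t - s) := by
  have hint : ∀ x ∈ interior (Ici a), x ∈ Ici a := fun x hx => interior_subset hx
  refine (convex_Ici a).image_sub_le_mul_sub_of_deriv_le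
    (fun x hx => (hf x hx).continuousAt.continuousWithinAt)
    (fun x hx => (hf x (hint x hx)).differentiableAt.differentiableWithinAt)
    (fun x hx => ?_) s hs t (le_trans hs hst) hst
  rw [(hf x (hint x hx)).deriv]
  exact hf' x (hint x hx)

theorem exists_lt_of_hasDerivAt_le_neg {f f' : ℝ → ℝ} {a c : ℝ} (hc : 0 < c)
    (hf : ∀ t ∈ Ici a, HasDerivAt f (f' t) t) (hf' : ∀ t ∈ Ici a, f' t ≤ -c) (m : ℝ) :
    ∃ t ∈ Ici a, f t < m := by
  have hgap : 0 ≤ (|f a - m| + 1) / c := by positivity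
  refine ⟨a + (|f a - m| + 1) / c, le_add_of_nonneg_right hgap, ?_⟩
  have hdecay := image_sub_le_mul_sub_of_hasDerivAt_le hf hf' self_mem_Ici
    (le_add_of_nonneg_right hgap)
  rw [add_sub_cancel_left, neg_mul, mul_div_cancel₀ _ hc.ne'] at hdecay
  linarith [le_abs_self (f a - m)]

theorem self_mul_chi (γ δ z : ℝ) : z * chi γ δ z = γ * |z| * min |z| δ := by
  unfold chi
  split_ifs with h
  · rw [min_eq_left h, mul_assoc, abs_mul_abs_self]
    ring
  · rw [min_eq_right (le_of_not_ge h)]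
    rcases lt_trichotomy z 0 with hz | rfl | hz
    · rw [Real.sign_of_neg hz, abs_of_neg hz]
      ring
    · simp
    · rw [Real.sign_of_pos hz, abs_of_pos hz]
      ring

theorem self_mul_chi_nonneg {γ δ : ℝ} (hγ : 0 ≤ γ) (hδ : 0 ≤ δ) (z : ℝ) :
    0 ≤ z * chi γ δ z := by
  rw [self_mul_chi]
  positivity

theorem mul_le_self_mul_chi {γ δ ε z : ℝ} (hγ : 0 ≤ γ) (hδ : 0 ≤ δ) (hε : 0 ≤ ε)
    (hz : ε ≤ |z|) : γ * ε * min ε δ ≤ z * chi γ δ z := by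
  rw [self_mul_chi]
  gcongr

/-- Every solution of the sliding-mode equation `ẏ = −χ(y)` on `[t₀,∞)` converges to `0`
as `t → ∞`, and `|y(t)|` is monotone nonincreasing on `[t₀,∞)`. -/
theorem sliding_mode_convergence (γ δ t₀ : ℝ) (hγ : 0 < γ) (hδ : 0 < δ) (y : ℝ → ℝ)
    (hy : ∀ t ∈ Set.Ici t₀, HasDerivAt y (-(chi γ δ (y t))) t) :
    Filter.Tendsto y Filter.atTop (nhds 0) ∧
    AntitoneOn (fun t => |y t|) (Set.Ici t₀) := by
  have hsq : ∀ t ∈ Ici t₀, HasDerivAt (fun t => y t ^ 2) (-(2 * (y t * chi γ δ (y t)))) t :=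
    fun t ht => ((hy t ht).fun_pow 2).congr_deriv (by push_cast; ring)
  have hanti : AntitoneOn (fun t => |y t|) (Ici t₀) := fun s hs t _ hst => by
    have hdecay := image_sub_le_mul_sub_of_hasDerivAt_le hsq (C := 0)
      (fun t _ => by linarith [self_mul_chi_nonneg hγ.le hδ.le (y t)]) hs hst
    exact sq_le_sq.mp (by linarith)
  refine ⟨?_, hanti⟩
  rw [NormedAddGroup.tendsto_nhds_zero]
  intro ε hε
  obtain ⟨T, hT, hyT⟩ : ∃ T ∈ Ici t₀, |y T| < ε := by
    by_contra! hbig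
    obtain ⟨t, -, hyt⟩ := exists_lt_of_hasDerivAt_le_neg (c := 2 * (γ * ε * min ε δ))
      (by positivity) hsq
      (fun t ht => by linarith [mul_le_self_mul_chi hγ.le hδ.le hε.le (hbig t ht)]) 0
    exact (sq_nonneg (y t)).not_gt hyt
  filter_upwards [eventually_ge_atTop T] with t hTt
  exact (hanti hT (le_trans hT hTt) hTt).trans_lt hyT
end

section
/- If the velocity vector of the robot rotates through a total angle 2π + β over a time interval while the vector from the robot to the nearest obstacle point rotates through a total angle at most β (both angles measured as continuous lifts), then there exist two times s₁ < s₂ within the interval at which the velocity is parallel to the robot-to-obstacle vector, pointing toward the obstacle at one time and away from it at the other. -/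
/-! The difference `φ_v - φ_r` drops by at least `2π` over `[t₀, t₁]`, so by the intermediate
value theorem it attains every value of an interval of length `2π`, and any such interval
contains a representative of each class modulo `2π`. -/

open Set

theorem exists_add_zsmul_mem_uIcc {p : ℝ} (hp : 0 < p) {x y : ℝ} (hxy : p ≤ |y - x|) (c : ℝ) :
    ∃ k : ℤ, c + k • p ∈ uIcc x y := by
  obtain ⟨k, hk, -⟩ := existsUnique_add_zsmul_mem_Ico hp c (min x y)
  refine ⟨k, hk.1, hk.2.le.trans ?_⟩
  rw [← max_sub_min_eq_abs] at hxy
  linarith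

theorem ContinuousOn.exists_eq_add_zsmul {f : ℝ → ℝ} {a b p : ℝ} (hab : a ≤ b)
    (hf : ContinuousOn f (Icc a b)) (hp : 0 < p) (hdrop : p ≤ |f b - f a|) (c : ℝ) :
    ∃ s ∈ Icc a b, ∃ k : ℤ, f s = c + k • p := by
  obtain ⟨k, hk⟩ := exists_add_zsmul_mem_uIcc hp hdrop c
  rw [← uIcc_of_le hab] at hf ⊢
  obtain ⟨s, hs, hfs⟩ := intermediate_value_uIcc hf hk
  exact ⟨s, hs, k, hfs⟩

theorem velocity_alignment_times_general (t₀ t₁ β : ℝ) (ht : t₀ ≤ t₁)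
    (φv φr : ℝ → ℝ)
    (hφv : ContinuousOn φv (Set.Icc t₀ t₁)) (hφr : ContinuousOn φr (Set.Icc t₀ t₁))
    (hrot : φv t₀ - φv t₁ = 2 * Real.pi + β)
    (hobs : |φr t₁ - φr t₀| ≤ β) :
    (∃ s₁ ∈ Set.Icc t₀ t₁, ∃ k : ℤ, φv s₁ - φr s₁ = Real.pi + 2 * Real.pi * k) ∧
    (∃ s₂ ∈ Set.Icc t₀ t₁, ∃ k : ℤ, φv s₂ - φr s₂ = 2 * Real.pi * k) := by
  have hdrop : 2 * Real.pi ≤ |(φv t₁ - φr t₁) - (φv t₀ - φr t₀)| := by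
    rw [abs_sub_comm]
    refine le_trans ?_ (le_abs_self _)
    linarith [(abs_le.mp hobs).1]
  have hit := (hφv.sub hφr).exists_eq_add_zsmul ht Real.two_pi_pos hdrop
  obtain ⟨s₁, hs₁, k₁, h₁⟩ := hit Real.pi
  obtain ⟨s₂, hs₂, k₂, h₂⟩ := hit 0
  refine ⟨⟨s₁, hs₁, k₁, ?_⟩, ⟨s₂, hs₂, k₂, ?_⟩⟩
  · simpa [zsmul_eq_mul, mul_comm] using h₁
  · simpa [zsmul_eq_mul, mul_comm] using h₂

/-- Topological step in Lemma 6: if over `[t₀, t₁]` the (lifted) heading `φ_v` of the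
velocity decreases by `2π + β` while the (lifted) heading `φ_r` of the robot-to-obstacle
vector changes by at most `β`, then there are times `s₁, s₂ ∈ [t₀, t₁]` at which the
velocity is antiparallel, respectively parallel, to the robot-to-obstacle vector. -/
theorem velocity_alignment_times (t₀ t₁ β : ℝ) (ht : t₀ ≤ t₁) (hβ : 0 ≤ β)
    (φv φr : ℝ → ℝ)
    (hφv : ContinuousOn φv (Set.Icc t₀ t₁)) (hφr : ContinuousOn φr (Set.Icc t₀ t₁))
    (hrot : φv t₀ - φv t₁ = 2 * Real.pi + β)
    (hobs : |φr t₁ - φr t₀| ≤ β) :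
    (∃ s₁ ∈ Set.Icc t₀ t₁, ∃ k : ℤ, φv s₁ - φr s₁ = Real.pi + 2 * Real.pi * k) ∧
    (∃ s₂ ∈ Set.Icc t₀ t₁, ∃ k : ℤ, φv s₂ - φr s₂ = 2 * Real.pi * k) :=
  velocity_alignment_times_general t₀ t₁ β ht φv φr hφv hφr hrot hobs
end
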